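/- arXiv:1410.7073 — 2 statements merged into one kernel-verified Lean document; each statement's English description precedes it below -/
import Mathlib

section
/- For every pair of fixed natural numbers d, m ≥ 1 there exists a natural number k with the following property: whenever G is a finite abelian group whose order is a product of at most d primes (counted with multiplicity), A ⊆ G contains 0, and there are cosets x₁+H₁, …, x_m+H_m of subgroups of G with kA ⊆ ⋃ᵢ(xᵢ+Hᵢ) and ⋃ᵢ(xᵢ+Hᵢ) ≠ G, then A is contained in a proper subgroup of G. -/
open Set AddSubgroup

variable {G : Type} [AddCommGroup G] {G' : Type} [AddCommGroup G']

/-- k-fold sumset with exactly k summands. -/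
def SS (A : Set G) (k : ℕ) : Set G := {g | ∃ f : Fin k → G, (∀ i, f i ∈ A) ∧ g = ∑ i, f i}

lemma ss_zero (A : Set G) : SS A 0 = {0} := by
  ext g; constructor
  · rintro ⟨f, -, rfl⟩; simp
  · rintro rfl; exact ⟨fun i => 0, fun i => i.elim0, by simp⟩

lemma ss_one (A : Set G) : SS A 1 = A := by
  ext g; constructor
  · rintro ⟨f, hf, rfl⟩; simpa using hf 0
  · intro hg; exact ⟨fun _ => g, fun _ => hg, by simp⟩

lemma ss_zero_mem {A : Set G} (h0 : (0:G) ∈ A) (k : ℕ) : (0:G) ∈ SS A k :=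
  ⟨fun _ => 0, fun _ => h0, by simp⟩

lemma ss_add_mem {A : Set G} {a b : ℕ} {g h : G} (hg : g ∈ SS A a) (hh : h ∈ SS A b) :
    g + h ∈ SS A (a + b) := by
  obtain ⟨f₁, hf₁, rfl⟩ := hg
  obtain ⟨f₂, hf₂, rfl⟩ := hh
  refine ⟨Fin.addCases f₁ f₂, ?_, ?_⟩
  · intro i
    refine Fin.addCases (motive := fun i => Fin.addCases f₁ f₂ i ∈ A) ?_ ?_ i
    · intro j; rw [Fin.addCases_left]; exact hf₁ j
    · intro j; rw [Fin.addCases_right]; exact hf₂ j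
  · rw [Fin.sum_univ_add]
    congr 1
    · exact (Finset.sum_congr rfl fun j _ => by rw [Fin.addCases_left])
    · exact (Finset.sum_congr rfl fun j _ => by rw [Fin.addCases_right])

lemma ss_split {A : Set G} {a b : ℕ} {g : G} (hg : g ∈ SS A (a + b)) :
    ∃ g₁ ∈ SS A a, ∃ g₂ ∈ SS A b, g = g₁ + g₂ := by
  obtain ⟨f, hf, rfl⟩ := hg
  refine ⟨∑ i : Fin a, f (Fin.castAdd b i), ⟨_, fun i => hf _, rfl⟩,
    ∑ i : Fin b, f (Fin.natAdd a i), ⟨_, fun i => hf _, rfl⟩, ?_⟩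
  exact Fin.sum_univ_add f

lemma ss_mono {A : Set G} (h0 : (0:G) ∈ A) {a b : ℕ} (hab : a ≤ b) : SS A a ⊆ SS A b := by
  intro g hg
  have : g + 0 ∈ SS A (a + (b - a)) := ss_add_mem hg (ss_zero_mem h0 _)
  rwa [add_zero, Nat.add_sub_cancel' hab] at this

lemma ss_ss {A : Set G} {c r : ℕ} {g : G} (hg : g ∈ SS (SS A c) r) : g ∈ SS A (r * c) := by
  induction r generalizing g with
  | zero => rw [ss_zero] at hg; rw [zero_mul]; rw [ss_zero]; exact hg
  | succ n ih =>
    obtain ⟨g₁, hg₁, g₂, hg₂, rfl⟩ := ss_split (A := SS A c) (a := n) (b := 1) hg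
    rw [ss_one] at hg₂
    have := ss_add_mem (ih hg₁) hg₂
    rwa [show (n+1)*c = n*c + c from Nat.succ_mul n c]

lemma ss_nsmul_mem {A : Set G} {c : ℕ} {g : G} (hg : g ∈ SS A c) (n : ℕ) :
    n • g ∈ SS A (n * c) := by
  apply ss_ss
  exact ⟨fun _ => g, fun _ => hg, by simp [Finset.sum_const]⟩

lemma ss_image (φ : G →+ G') (A : Set G) (k : ℕ) : SS (φ '' A) k = φ '' SS A k := by
  ext g; constructor
  · rintro ⟨f, hf, rfl⟩
    have : ∀ i, ∃ a, a ∈ A ∧ φ a = f i := fun i => hf i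
    choose w hw hw2 using this
    exact ⟨∑ i, w i, ⟨w, hw, rfl⟩, by rw [map_sum]; exact Finset.sum_congr rfl fun i _ => hw2 i⟩
  · rintro ⟨h, ⟨f, hf, rfl⟩, rfl⟩
    exact ⟨fun i => φ (f i), fun i => ⟨f i, hf i, rfl⟩, (map_sum φ f _)⟩

lemma ss_subset_closure (A : Set G) (k : ℕ) : SS A k ⊆ (closure A : Set G) := by
  rintro g ⟨f, hf, rfl⟩
  exact AddSubgroup.sum_mem _ fun i _ => subset_closure (hf i)

lemma ss_translate {A B : Set G} {y : G} {c : ℕ} (hB : ∀ β ∈ B, β + y ∈ SS A c)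
    {r : ℕ} {g : G} (hg : g ∈ SS B r) : g + r • y ∈ SS A (r * c) := by
  obtain ⟨f, hf, rfl⟩ := hg
  apply ss_ss (c := c) (r := r)
  refine ⟨fun i => f i + y, fun i => hB _ (hf i), ?_⟩
  rw [Finset.sum_add_distrib]
  simp [Finset.sum_const, add_comm]
section Stable
variable [Fintype G]

lemma ss_stable_ge {A : Set G} (h0 : (0:G) ∈ A) {k : ℕ} (hst : SS A k = SS A (k+1)) :
    ∀ j, k ≤ j → SS A j = SS A k := by
  intro j hj
  obtain ⟨i, rfl⟩ := Nat.exists_eq_add_of_le hj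
  induction i with
  | zero => rfl
  | succ n ih =>
    have h1 : SS A (k + n + 1) ⊆ SS A (k + n) := by
      intro g hg
      obtain ⟨g₁, hg₁, g₂, hg₂, rfl⟩ := ss_split (a := k + n) (b := 1) hg
      rw [ih (by omega)] at hg₁
      have h4 : g₁ + g₂ ∈ SS A (k + 1) := ss_add_mem hg₁ hg₂
      rw [← hst] at h4
      rw [ih (by omega)]
      exact h4
    have h2 : SS A (k + n) ⊆ SS A (k + n + 1) := ss_mono h0 (by omega)
    rw [show k + (n+1) = k + n + 1 from rfl, le_antisymm h1 h2, ih (by omega)]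

lemma ss_stable_closure {A : Set G} (h0 : (0:G) ∈ A) {k : ℕ} (hst : SS A k = SS A (k+1)) :
    (closure A : Set G) = SS A k := by
  have hstab := ss_stable_ge h0 hst
  have hneg : ∀ x, x ∈ SS A k → -x ∈ SS A k := by
    intro x hx
    by_cases hx0 : x = 0
    · rw [hx0, neg_zero]; exact ss_zero_mem h0 k
    · have hpos : 0 < addOrderOf x := addOrderOf_pos x
      have hn : 2 ≤ addOrderOf x := by
        rcases Nat.lt_or_ge (addOrderOf x) 2 with h|h
        · have h1 : addOrderOf x = 1 := by omega
          exact absurd (AddMonoid.addOrderOf_eq_one_iff.mp h1) hx0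
        · exact h
      have h1 : (addOrderOf x - 1) • x ∈ SS A ((addOrderOf x - 1) * k) := ss_nsmul_mem hx _
      have h3 : (addOrderOf x - 1) • x + x = 0 := by
        calc (addOrderOf x - 1) • x + x = (addOrderOf x - 1 + 1) • x := by
              rw [add_nsmul, one_nsmul]
          _ = addOrderOf x • x := by rw [Nat.sub_add_cancel (by omega)]
          _ = 0 := addOrderOf_nsmul_eq_zero x
      have h2 : (addOrderOf x - 1) • x = -x := eq_neg_of_add_eq_zero_left h3
      rw [← h2]
      rwa [hstab ((addOrderOf x - 1) * k) (Nat.le_mul_of_pos_left k (by omega))] at h1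
  have hAsub : A ⊆ SS A k := by
    rcases Nat.eq_zero_or_pos k with hk|hk
    · subst hk
      rw [← hstab 1 (by omega), ss_one]
    · intro a ha
      exact ss_mono h0 hk ((ss_one A).symm ▸ ha)
  apply subset_antisymm
  · have : closure A ≤
        { carrier := SS A k
          zero_mem' := ss_zero_mem h0 k
          add_mem' := fun ha hb => by
            have := ss_add_mem ha hb
            rwa [hstab (k+k) (by omega)] at this
          neg_mem' := fun ha => hneg _ ha } := (closure_le _).mpr hAsub
    exact this
  · exact ss_subset_closure A k

/-- growth: either the sumset is already the full closure, or it has at least k+1 elements -/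
lemma ss_growth {A : Set G} (h0 : (0:G) ∈ A) :
    ∀ k, (closure A : Set G) = SS A k ∨ k + 1 ≤ (SS A k).ncard := by
  intro k
  induction k with
  | zero =>
    right
    rw [ss_zero]
    simp
  | succ n ih =>
    rcases ih with h|h
    · left
      apply subset_antisymm
      · rw [h]; exact ss_mono h0 (by omega)
      · exact ss_subset_closure A _
    · by_cases hst : SS A n = SS A (n+1)
      · left
        rw [ss_stable_closure h0 hst, hst]
      · right
        have hsub : SS A n ⊂ SS A (n+1) := ssubset_of_subset_of_ne (ss_mono h0 (by omega)) hst
        have := Set.ncard_lt_ncard hsub (Set.toFinite _)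
        omega

/-- filling lemma -/
lemma ss_fill {A : Set G} (h0 : (0:G) ∈ A) (hgen : closure A = ⊤) {Λ : ℕ}
    (hcard : Nat.card G ≤ Λ) : SS A Λ = univ := by
  rcases ss_growth h0 (A := A) Λ with h|h
  · rw [← h, hgen]; rfl
  · exfalso
    have h2 : (SS A Λ).ncard ≤ Nat.card G := by
      rw [← Set.ncard_univ]
      exact Set.ncard_le_ncard (subset_univ _) (Set.toFinite _)
    omega

end Stable
section Arith
open ArithmeticFunction

lemma cardFactors_le_of_dvd {a b : ℕ} (h : a ∣ b) (hb : b ≠ 0) :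
    cardFactors a ≤ cardFactors b := by
  obtain ⟨c, rfl⟩ := h
  have ha : a ≠ 0 := by rintro rfl; simp at hb
  have hc : c ≠ 0 := by rintro rfl; simp at hb
  rw [cardFactors_mul ha hc]
  omega

lemma cardFactors_lt_of_dvd {a b : ℕ} (h : a ∣ b) (hab : a ≠ b) (hb : b ≠ 0) :
    cardFactors a + 1 ≤ cardFactors b := by
  obtain ⟨c, rfl⟩ := h
  have ha : a ≠ 0 := by rintro rfl; simp at hb
  have hc : c ≠ 0 := by rintro rfl; simp at hb
  have hc1 : c ≠ 1 := by rintro rfl; simp at hab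
  have h2 : 1 ≤ cardFactors c := by
    have h3 : c.minFac ∈ c.primeFactorsList :=
      (Nat.mem_primeFactorsList_iff_dvd hc (Nat.minFac_prime hc1)).mpr (Nat.minFac_dvd c)
    rw [cardFactors_apply]
    exact List.length_pos_of_mem h3
  rw [cardFactors_mul ha hc]
  omega

lemma smooth_le {mm : ℕ} (hmm : 1 ≤ mm) : ∀ n : ℕ, n ≠ 0 →
    (∀ p : ℕ, p.Prime → p ∣ n → p ≤ mm) → n ≤ mm ^ (cardFactors n) := by
  intro n
  induction n using Nat.strong_induction_on with
  | _ n ih =>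
    intro hn hp
    rcases Nat.lt_or_ge n 2 with h1|h1
    · have h2 : n = 1 := by omega
      rw [h2]; exact Nat.one_le_pow _ _ (by omega)
    · have hn1 : n ≠ 1 := by omega
      have hpf : n.minFac.Prime := Nat.minFac_prime hn1
      obtain ⟨c, hc⟩ := Nat.minFac_dvd n
      have hc0 : c ≠ 0 := by rintro rfl; simp at hc; omega
      have hclt : c < n := by
        rcases Nat.lt_or_ge c n with h|h
        · exact h
        · exfalso
          have : n.minFac * c ≥ 2 * n := by
            have := hpf.two_le
            calc n.minFac * c ≥ 2 * c := Nat.mul_le_mul_right c this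
              _ ≥ 2 * n := Nat.mul_le_mul_left 2 h
          omega
      have hcdvd : ∀ p : ℕ, p.Prime → p ∣ c → p ≤ mm := by
        intro p hp2 hdvd
        exact hp p hp2 (hc ▸ Dvd.dvd.mul_left hdvd _)
      have ihc := ih c hclt hc0 hcdvd
      have hΩ : cardFactors n = 1 + cardFactors c := by
        rw [hc, cardFactors_mul (Nat.Prime.ne_zero hpf) hc0, cardFactors_apply_prime hpf]
      rw [hΩ, hc, pow_add, pow_one]
      exact Nat.mul_le_mul (hp _ hpf (Nat.minFac_dvd n)) ihc
end Arith
section GroupHelpers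
variable [Fintype G]

lemma coset_mem {x g : G} {H : AddSubgroup G} :
    g ∈ (x + ·) '' (H : Set G) ↔ g - x ∈ H := by
  constructor
  · rintro ⟨h, hh, rfl⟩; simpa using hh
  · intro h; exact ⟨g - x, h, by show x + (g - x) = g; rw [add_comm]; exact sub_add_cancel g x⟩

lemma closure_subtype_top {S : AddSubgroup G} {B : Set ↥S}
    (h : closure ((S.subtype) '' B) = S) : closure B = ⊤ := by
  apply AddSubgroup.map_injective S.subtype_injective
  rw [AddMonoidHom.map_closure, h]
  have h2 : AddSubgroup.map S.subtype ⊤ = S.subtype.range := by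
    rw [AddMonoidHom.range_eq_map]
  rw [h2, range_subtype]

lemma card_pos' : 0 < Nat.card G := Nat.card_pos

lemma omega_subgroup_lt {N : AddSubgroup G} (hN : N ≠ ⊤) {d : ℕ}
    (hd : ArithmeticFunction.cardFactors (Nat.card G) ≤ d + 1) :
    ArithmeticFunction.cardFactors (Nat.card ↥N) ≤ d := by
  have h1 : Nat.card ↥N ∣ Nat.card G := AddSubgroup.card_addSubgroup_dvd_card N
  have h2 : Nat.card ↥N ≠ Nat.card G := fun h => hN (AddSubgroup.eq_top_of_card_eq N h)
  have := cardFactors_lt_of_dvd h1 h2 card_pos'.ne'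
  omega

lemma omega_quotient_lt {N : AddSubgroup G} (hN : N ≠ ⊥) {d : ℕ}
    (hd : ArithmeticFunction.cardFactors (Nat.card G) ≤ d + 1) :
    ArithmeticFunction.cardFactors (Nat.card (G ⧸ N)) ≤ d := by
  have hq := AddSubgroup.card_eq_card_quotient_mul_card_addSubgroup N
  have h1 : Nat.card (G ⧸ N) ∣ Nat.card G := ⟨Nat.card ↥N, hq⟩
  letI : Fintype ↥N := Fintype.ofFinite _
  have hN2 : 2 ≤ Nat.card ↥N := by
    obtain ⟨b, hb, hbne⟩ := (AddSubgroup.bot_or_exists_ne_zero N).resolve_left hN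
    have : Nontrivial ↥N := ⟨⟨⟨b, hb⟩, ⟨0, N.zero_mem⟩, by simp [hbne]⟩⟩
    have := Fintype.one_lt_card_iff_nontrivial (α := ↥N) |>.mpr this
    have h3 : Nat.card ↥N = Fintype.card ↥N := Nat.card_eq_fintype_card
    omega
  have h2 : Nat.card (G ⧸ N) ≠ Nat.card G := by
    intro h
    have hGpos := card_pos' (G := G)
    nlinarith [hq, hN2]
  have := cardFactors_lt_of_dvd h1 h2 card_pos'.ne'
  omega

end GroupHelpers
def kk : ℕ → ℕ → ℕ
  | 0, _ => 1
  | _+1, 0 => 1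
  | d+1, m+1 =>
      (m+1)^(d+1) + Nat.factorial (m+1) * kk d (m+1) + (kk d (m+1)) * (m+2)
        + kk d (m+1) + kk (d+1) m + m + 3
  termination_by d m => (d, m)

lemma kk_eq (d m : ℕ) : kk (d+1) (m+1) =
    (m+1)^(d+1) + Nat.factorial (m+1) * kk d (m+1) + (kk d (m+1)) * (m+2)
      + kk d (m+1) + kk (d+1) m + m + 3 := by
  rw [kk]

def MasterP (d m : ℕ) : Prop :=
  ∀ (G : Type) [AddCommGroup G] [Fintype G],
    ArithmeticFunction.cardFactors (Nat.card G) ≤ d →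
    ∀ (A : Set G), (0 : G) ∈ A →
    ∀ (x : Fin m → G) (H : Fin m → AddSubgroup G),
      SS A (kk d m) ⊆ ⋃ i : Fin m, ((x i + ·) '' (H i : Set G)) →
      (⋃ i : Fin m, ((x i + ·) '' (H i : Set G))) ≠ Set.univ →
      ∃ K : AddSubgroup G, K ≠ ⊤ ∧ A ⊆ (K : Set G)

section Subcall
variable [Fintype G]

lemma subcall {d m : ℕ} (ih : MasterP d (m+1))
    (x : Fin (m+1) → G) (H : Fin (m+1) → AddSubgroup G)
    (S : AddSubgroup G) (hΩS : ArithmeticFunction.cardFactors (Nat.card ↥S) ≤ d)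
    (B : Set ↥S) (hB0 : (0:↥S) ∈ B) (α : G)
    (hcov : ∀ s : ↥S, s ∈ SS B (kk d (m+1)) →
      (↑s + α) ∈ ⋃ i : Fin (m+1), ((x i + ·) '' (H i : Set G)))
    (τ : ↥S) (hτ : ((τ:G) + α) ∉ ⋃ i : Fin (m+1), ((x i + ·) '' (H i : Set G))) :
    ∃ K : AddSubgroup ↥S, K ≠ ⊤ ∧ B ⊆ (K : Set ↥S) := by
  classical
  letI : Fintype ↥S := Fintype.ofFinite _
  have hα : α ∈ ⋃ i : Fin (m+1), ((x i + ·) '' (H i : Set G)) := by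
    have := hcov 0 (ss_zero_mem hB0 _)
    simpa using this
  rw [Set.mem_iUnion] at hα
  obtain ⟨i₀, hi₀⟩ := hα
  set valid : Fin (m+1) → Prop := fun i => ∃ s : ↥S, ((s:G) + α) ∈ (x i + ·) '' (H i : Set G)
    with hvalid
  have hvi₀ : valid i₀ := ⟨0, by simpa using hi₀⟩
  set xt : Fin (m+1) → ↥S := fun i => if h : valid i then h.choose else 0 with hxt
  set Ht : Fin (m+1) → AddSubgroup ↥S := fun i =>
    if valid i then (H i).addSubgroupOf S else (H i₀).addSubgroupOf S with hHt
  -- spec for valid i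
  have hspec : ∀ i, valid i → ((xt i : G) + α) ∈ (x i + ·) '' (H i : Set G) := by
    intro i hv
    rw [hxt]; simp only [dif_pos hv]
    exact hv.choose_spec
  have hP1 : ∀ s : ↥S, s ∈ SS B (kk d (m+1)) →
      s ∈ ⋃ i : Fin (m+1), ((xt i + ·) '' (Ht i : Set ↥S)) := by
    intro s hs
    have := hcov s hs
    rw [Set.mem_iUnion] at this
    obtain ⟨i, hi⟩ := this
    have hv : valid i := ⟨s, hi⟩
    rw [Set.mem_iUnion]
    refine ⟨i, ?_⟩
    rw [coset_mem]
    have h1 : ((s:G) + α) - x i ∈ H i := coset_mem.mp hi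
    have h2 : ((xt i : G) + α) - x i ∈ H i := coset_mem.mp (hspec i hv)
    have h3 : ((s - xt i : ↥S) : G) ∈ H i := by
      push_cast
      have := (H i).sub_mem h1 h2
      convert this using 1
      abel
    rw [hHt]; simp only [if_pos hv]
    exact (AddSubgroup.mem_addSubgroupOf).mpr h3
  have hP2 : τ ∉ ⋃ i : Fin (m+1), ((xt i + ·) '' (Ht i : Set ↥S)) := by
    intro hmem
    rw [Set.mem_iUnion] at hmem
    obtain ⟨i, hi⟩ := hmem
    rw [coset_mem] at hi
    by_cases hv : valid i
    · rw [hHt] at hi; simp only [if_pos hv] at hi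
      rw [AddSubgroup.mem_addSubgroupOf] at hi
      apply hτ
      rw [Set.mem_iUnion]
      refine ⟨i, ?_⟩
      rw [coset_mem]
      have h2 : ((xt i : G) + α) - x i ∈ H i := coset_mem.mp (hspec i hv)
      have : ((τ:G) + α) - x i = ((τ - xt i : ↥S) : G) + (((xt i : G) + α) - x i) := by
        push_cast; abel
      rw [this]
      exact (H i).add_mem hi h2
    · rw [hHt] at hi; simp only [if_neg hv] at hi
      rw [AddSubgroup.mem_addSubgroupOf] at hi
      apply hτ
      rw [Set.mem_iUnion]
      refine ⟨i₀, ?_⟩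
      rw [coset_mem]
      have h2 : α - x i₀ ∈ H i₀ := coset_mem.mp hi₀
      have hxt0 : xt i = 0 := by rw [hxt]; simp only [dif_neg hv]
      rw [hxt0, sub_zero] at hi
      have : ((τ:G) + α) - x i₀ = (τ:G) + (α - x i₀) := by abel
      rw [this]
      exact (H i₀).add_mem hi h2
  have hne : (⋃ i : Fin (m+1), ((xt i + ·) '' (Ht i : Set ↥S))) ≠ Set.univ := by
    intro h
    exact hP2 (h ▸ Set.mem_univ τ)
  exact ih ↥S hΩS B hB0 xt Ht hP1 hne

end Subcall
lemma ss_set_mono {A B : Set G} (h : A ⊆ B) (k : ℕ) : SS A k ⊆ SS B k := by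
  rintro g ⟨f, hf, rfl⟩
  exact ⟨f, fun i => h (hf i), rfl⟩

lemma ss_coe_mem {S : AddSubgroup G} {B : Set ↥S} {k : ℕ} {s : ↥S} (hs : s ∈ SS B k) :
    (s : G) ∈ SS ((S.subtype) '' B) k := by
  rw [ss_image]
  exact ⟨s, hs, rfl⟩

lemma closure_pair_zero {b : G} : closure ({0, b} : Set G) = closure {b} := by
  apply le_antisymm
  · rw [closure_le]
    rintro g (rfl | rfl)
    · exact (closure {b}).zero_mem
    · exact subset_closure rfl
  · exact AddSubgroup.closure_mono (by simp)
theorem master : ∀ d m : ℕ, MasterP d m := by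
  intro d
  induction d with
  | zero =>
    intro m G instG instF hΩ A h0 x H hcov hne
    exfalso
    have hG1 : Nat.card G = 1 := by
      by_contra hne1
      have h2 : 2 ≤ Nat.card G := by
        have := card_pos' (G := G); omega
      have := cardFactors_lt_of_dvd (one_dvd (Nat.card G)) (by omega) (by omega)
      rw [ArithmeticFunction.cardFactors_one] at this
      omega
    apply hne
    rw [Set.eq_univ_iff_forall]
    intro g
    have hsub : Subsingleton G := (Nat.card_eq_one_iff_unique.mp hG1).1
    have : g = 0 := Subsingleton.elim g 0
    rw [this]
    exact hcov (ss_zero_mem h0 _)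
  | succ d ihd =>
    intro m
    induction m with
    | zero =>
      intro G instG instF hΩ A h0 x H hcov hne
      exfalso
      have := hcov (ss_zero_mem h0 _)
      rw [Set.mem_iUnion] at this
      obtain ⟨i, -⟩ := this
      exact i.elim0
    | succ m ihm =>
      intro G instG instF hΩ A h0 x H hcov hne
      classical
      by_cases hclo : closure A = ⊤
      case neg => exact ⟨closure A, hclo, subset_closure⟩
      -- notation
      set U : Set G := ⋃ i : Fin (m+1), ((x i + ·) '' (H i : Set G)) with hU
      obtain ⟨z, hz⟩ := Set.ne_univ_iff_exists_notMem U |>.mp hne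
      have hHproper : ∀ i, H i ≠ ⊤ := by
        intro i hi
        apply hne
        rw [Set.eq_univ_iff_forall]
        intro g
        rw [hU, Set.mem_iUnion]
        exact ⟨i, coset_mem.mpr (by rw [hi]; trivial)⟩
      set a := kk d (m+1) with ha
      set c := kk (d+1) m with hc
      set W := a + c with hW
      set M := Nat.factorial (m+1) with hM
      set Λ := (m+1)^(d+1) with hΛ
      set K := kk (d+1) (m+1) with hK
      have hKeq : K = Λ + M * a + a * (m+2) + a + c + m + 3 := kk_eq d m
      have hK1 : m + 2 ≤ K := by omega
      have hK2 : a * (m+1) + W ≤ K := by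
        have : a * (m+1) ≤ a * (m+2) := Nat.mul_le_mul_left a (by omega)
        omega
      have hK3 : a * M + Λ ≤ K := by rw [Nat.mul_comm]; omega
      have hK4 : a ≤ K := by omega
      have hc5 : c ≤ W := by omega
      -- closure as univ
      have hclos_univ : (closure A : Set G) = Set.univ := by rw [hclo]; rfl
      have hnotstable : ∀ r, r ≤ K → (closure A : Set G) ≠ SS A r := by
        intro r hr habs
        apply hz
        apply hcov
        apply ss_mono h0 hr
        rw [← habs, hclos_univ]
        trivial
      -- pigeonhole
      have hcard : m + 2 ≤ (SS A (m+1)).ncard := by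
        rcases ss_growth h0 (A := A) (m+1) with h|h
        · exact absurd h (hnotstable (m+1) (by omega))
        · omega
      obtain ⟨j, u, v, huS, hvS, huv, huC, hvC⟩ :
          ∃ j u v, u ∈ SS A (m+1) ∧ v ∈ SS A (m+1) ∧ u ≠ v ∧
            u ∈ (x j + ·) '' (H j : Set G) ∧ v ∈ (x j + ·) '' (H j : Set G) := by
        have hTfin : m + 2 ≤ (SS A (m+1)).toFinset.card := by
          rwa [Set.ncard_eq_toFinset_card'] at hcard
        have hmaps : ∀ g ∈ (SS A (m+1)).toFinset, ∃ i, g ∈ (x i + ·) '' (H i : Set G) := by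
          intro g hg
          rw [Set.mem_toFinset] at hg
          have := hcov (ss_mono h0 (show m+1 ≤ K by omega) hg)
          rwa [hU, Set.mem_iUnion] at this
        choose ι hι using hmaps
        have : ∃ u ∈ (SS A (m+1)).toFinset.attach, ∃ v ∈ (SS A (m+1)).toFinset.attach,
            u ≠ v ∧ ι u.1 u.2 = ι v.1 v.2 := by
          refine Finset.exists_ne_map_eq_of_card_lt_of_maps_to
            (t := (Finset.univ : Finset (Fin (m+1)))) ?_ (fun g _ => Finset.mem_univ _)
          rw [Finset.card_attach]
          have h9 : (Finset.univ : Finset (Fin (m+1))).card = m + 1 := by simp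
          omega
        obtain ⟨⟨u, hu⟩, -, ⟨v, hv⟩, -, huv, hsame⟩ := this
        refine ⟨ι u hu, u, v, by rwa [← Set.mem_toFinset], by rwa [← Set.mem_toFinset],
          by simpa using huv, hι u hu, ?_⟩
        rw [hsame]
        exact hι v hv
      -- difference element
      set b := u - v with hbdef
      have hbH : b ∈ H j := by
        have h1 := coset_mem.mp huC
        have h2 := coset_mem.mp hvC
        have h3 : b = (u - x j) - (v - x j) := by rw [hbdef]; abel
        rw [h3]; exact (H j).sub_mem h1 h2
      have hb0 : b ≠ 0 := sub_ne_zero_of_ne huv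
      set N := closure ({b} : Set G) with hNdef
      have hbN : b ∈ N := subset_closure rfl
      have hNbot : N ≠ ⊥ := by
        intro h
        exact hb0 (by rw [← AddSubgroup.mem_bot, ← h]; exact hbN)
      by_cases hallJ : ∀ i, b ∈ H i
      · -- CASE A : quotient by N
        set π := QuotientAddGroup.mk' N with hπ
        letI : Fintype (G ⧸ N) := Fintype.ofFinite _
        have hΩQ : ArithmeticFunction.cardFactors (Nat.card (G ⧸ N)) ≤ d :=
          omega_quotient_lt hNbot hΩ
        have h0Q : (0 : G ⧸ N) ∈ (π '' A) := ⟨0, h0, map_zero π⟩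
        have hcovQ : SS (π '' A) (kk d (m+1)) ⊆
            ⋃ i : Fin (m+1), ((π (x i) + ·) '' (((H i).map π : AddSubgroup (G ⧸ N)) : Set (G ⧸ N))) := by
          intro q hq
          rw [ss_image] at hq
          obtain ⟨g, hg, rfl⟩ := hq
          have hgU : g ∈ U := hcov (ss_mono h0 hK4 hg)
          rw [hU, Set.mem_iUnion] at hgU
          obtain ⟨i, hi⟩ := hgU
          rw [Set.mem_iUnion]
          refine ⟨i, ?_⟩
          rw [coset_mem, ← map_sub]
          exact AddSubgroup.mem_map_of_mem π (coset_mem.mp hi)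
        have hneQ : (⋃ i : Fin (m+1),
            ((π (x i) + ·) '' (((H i).map π : AddSubgroup (G ⧸ N)) : Set (G ⧸ N)))) ≠ Set.univ := by
          rw [Set.ne_univ_iff_exists_notMem]
          refine ⟨π z, fun hmem => ?_⟩
          rw [Set.mem_iUnion] at hmem
          obtain ⟨i, hi⟩ := hmem
          rw [coset_mem, ← map_sub, AddSubgroup.mem_map] at hi
          obtain ⟨h', hh', heq⟩ := hi
          have h5 : π (z - x i - h') = 0 := by rw [map_sub, heq, sub_self]
          have h3 : z - x i - h' ∈ N := (QuotientAddGroup.eq_zero_iff _).mp h5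
          have hNHi : N ≤ H i := by
            rw [hNdef, closure_le]
            simpa using hallJ i
          have h6 : z - x i ∈ H i := by
            have h2 := (H i).add_mem (hNHi h3) hh'
            rwa [sub_add_cancel] at h2
          exact hz (by rw [hU, Set.mem_iUnion]; exact ⟨i, coset_mem.mpr h6⟩)
        obtain ⟨Kb, hKb, hsubQ⟩ := ihd (m+1) (G ⧸ N) hΩQ (π '' A) h0Q (fun i => π (x i))
          (fun i => (H i).map π) hcovQ hneQ
        exfalso
        have hKtop : closure A ≤ AddSubgroup.comap π Kb := by
          rw [closure_le]
          intro a' ha'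
          rw [SetLike.mem_coe, AddSubgroup.mem_comap]
          exact hsubQ ⟨a', ha', rfl⟩
        have hcomap_top : AddSubgroup.comap π Kb = ⊤ :=
          eq_top_iff.mpr (by rw [← hclo]; exact hKtop)
        apply hKb
        rw [eq_top_iff]
        rintro q -
        obtain ⟨g, rfl⟩ := QuotientAddGroup.mk'_surjective N q
        have hg : g ∈ AddSubgroup.comap π Kb := by rw [hcomap_top]; trivial
        exact (AddSubgroup.mem_comap).mp hg
      · push_neg at hallJ
        obtain ⟨i_out, hiout⟩ := hallJ
        -- multiplication by M map
        set φM : G →+ G := AddMonoidHom.mk' (fun g => M • g) (fun p q => smul_add M p q)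
          with hφMdef
        have hφM : ∀ g : G, φM g = M • g := fun g => rfl
        set T := φM.range with hTdef
        by_cases hTtop : T = ⊤
        · -- big world : all primes dividing |G| exceed m+1
          have hbig : ∀ p : ℕ, p.Prime → p ∣ Nat.card G → m + 1 < p := by
            intro p hp hdvd
            by_contra hle
            push_neg at hle
            haveI : Fact p.Prime := ⟨hp⟩
            obtain ⟨g, hg⟩ := exists_prime_addOrderOf_dvd_card (G := G) p
              (by rwa [← Nat.card_eq_fintype_card])
            have hg0 : g ≠ 0 := by
              intro h
              rw [h, addOrderOf_zero] at hg
              exact hp.one_lt.ne' hg.symm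
            have hpg : p • g = 0 := by rw [← hg]; exact addOrderOf_nsmul_eq_zero g
            have hpM : p ∣ M := by rw [hM]; exact (Nat.Prime.dvd_factorial hp).mpr hle
            have hMg : φM g = 0 := by
              obtain ⟨q, hq⟩ := hpM
              rw [hφM, hq, mul_nsmul, hpg, smul_zero]
            have hsurj : Function.Surjective ⇑φM := AddMonoidHom.range_eq_top.mp hTtop
            have hinj : Function.Injective ⇑φM := (Finite.injective_iff_surjective).mpr hsurj
            exact hg0 (hinj (by rw [hMg, map_zero]))
          by_cases halpha : ∃ z' ∈ SS A W, ∃ nh ∈ N, (nh + ((a • v : G) + z')) ∉ U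
          · -- escape case : recurse inside N
            exfalso
            obtain ⟨z', hz', nh, hnh, hnotU⟩ := halpha
            have hNtop : N ≠ ⊤ := by
              intro h
              apply hHproper j
              rw [eq_top_iff, ← h, hNdef, closure_le]
              simpa using hbH
            have hΩN : ArithmeticFunction.cardFactors (Nat.card ↥N) ≤ d :=
              omega_subgroup_lt hNtop hΩ
            set Bn : Set ↥N := {0, ⟨b, hbN⟩} with hBn
            have h0Bn : (0:↥N) ∈ Bn := Or.inl rfl
            have himgBn : N.subtype '' Bn = {0, b} := by
              rw [hBn, Set.image_pair]
              simp
            have hBy : ∀ β ∈ ({0, b} : Set G), β + v ∈ SS A (m+1) := by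
              rintro β (rfl | rfl)
              · rwa [zero_add]
              · have h1 : b + v = u := by rw [hbdef]; abel
                rw [h1]; exact huS
            have hcovN : ∀ s : ↥N, s ∈ SS Bn (kk d (m+1)) →
                ((s:G) + (a • v + z')) ∈ ⋃ i : Fin (m+1), ((x i + ·) '' ((H i : Set G))) := by
              intro s hs
              have h1 : (s:G) ∈ SS ({0, b} : Set G) a := by
                rw [← himgBn]; exact ss_coe_mem hs
              have h2 : (s:G) + a • v ∈ SS A (a * (m+1)) := ss_translate hBy h1
              have h3 : ((s:G) + a • v) + z' ∈ SS A (a * (m+1) + W) := ss_add_mem h2 hz'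
              have h4 := hcov (ss_mono h0 hK2 h3)
              rw [hU] at h4
              rwa [add_assoc] at h4
            obtain ⟨Kn, hKn, hBsubn⟩ := subcall (ihd (m+1)) x H N hΩN Bn h0Bn (a • v + z')
              hcovN ⟨nh, hnh⟩ (by rw [hU] at hnotU; exact hnotU)
            have hclosBn : closure Bn = (⊤ : AddSubgroup ↥N) := by
              apply closure_subtype_top
              rw [himgBn, closure_pair_zero]
            exact hKn (eq_top_iff.mpr (by rw [← hclosBn]; exact (closure_le _).mpr hBsubn))
          · -- trapped case
            push_neg at halpha
            have step4 : ∀ z' ∈ SS A W, ∃ i, b ∈ H i ∧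
                ((a • v : G) + z') ∈ (x i + ·) '' (H i : Set G) := by
              intro z' hz'
              by_contra hno
              push_neg at hno
              letI : Fintype ↥N := Fintype.ofFinite _
              have hcover : ∀ n : ↥N, ∃ i, b ∉ H i ∧
                  ((n:G) + (a • v + z')) ∈ (x i + ·) '' (H i : Set G) := by
                intro n
                have h1 : (n:G) + (a • v + z') ∈ U := halpha z' hz' (n:G) n.2
                rw [hU, Set.mem_iUnion] at h1
                obtain ⟨i, hi⟩ := h1
                by_cases hbH2 : b ∈ H i
                · exfalso
                  have hNle2 : N ≤ H i := by rw [hNdef, closure_le]; simpa using hbH2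
                  have hn : (n:G) ∈ H i := hNle2 n.2
                  have h2 : ((n:G) + (a • v + z')) - x i ∈ H i := coset_mem.mp hi
                  have h3 : (a • v + z') - x i ∈ H i := by
                    have h4 := (H i).sub_mem h2 hn
                    rwa [show (n:G) + (a • v + z') - x i - n = (a • v + z') - x i by abel] at h4
                  exact hno i hbH2 (coset_mem.mpr h3)
                · exact ⟨i, hbH2, hi⟩
              set Pfin : Fin (m+1) → Finset ↥N := fun i =>
                Finset.univ.filter (fun ν : ↥N => ((ν:G) + (a • v + z')) ∈ (x i + ·) '' (H i : Set G))
                with hPfin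
              set bad : Finset (Fin (m+1)) := Finset.univ.filter (fun i => b ∉ H i) with hbad
              have hsubU : (Finset.univ : Finset ↥N) ⊆ bad.biUnion Pfin := by
                intro ν _
                obtain ⟨i, hbi, hmem⟩ := hcover ν
                rw [Finset.mem_biUnion]
                exact ⟨i, Finset.mem_filter.mpr ⟨Finset.mem_univ _, hbi⟩,
                  Finset.mem_filter.mpr ⟨Finset.mem_univ _, hmem⟩⟩
              have hcount1 : Nat.card ↥N ≤ ∑ i ∈ bad, (Pfin i).card := by
                calc Nat.card ↥N = (Finset.univ : Finset ↥N).card := by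
                      rw [Nat.card_eq_fintype_card, Finset.card_univ]
                  _ ≤ (bad.biUnion Pfin).card := Finset.card_le_card hsubU
                  _ ≤ ∑ i ∈ bad, (Pfin i).card := Finset.card_biUnion_le
              have hperbound : ∀ i ∈ bad, (m + 2) * (Pfin i).card ≤ Nat.card ↥N := by
                intro i hi
                rw [hbad, Finset.mem_filter] at hi
                obtain ⟨-, hbi⟩ := hi
                rcases Finset.eq_empty_or_nonempty (Pfin i) with hP | ⟨w, hw⟩
                · rw [hP]; simp
                · set Ki := (H i).addSubgroupOf N with hKi
                  letI : Fintype ↥Ki := Fintype.ofFinite _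
                  letI : Fintype (↥N ⧸ Ki) := Fintype.ofFinite _
                  have hwmem : ((w:G) + (a • v + z')) ∈ (x i + ·) '' (H i : Set G) := by
                    rw [hPfin] at hw
                    exact (Finset.mem_filter.mp hw).2
                  have hmap : ∀ ν ∈ Pfin i, ν - w ∈ Ki := by
                    intro ν hν
                    have hνmem : ((ν:G) + (a • v + z')) ∈ (x i + ·) '' (H i : Set G) := by
                      rw [hPfin] at hν
                      exact (Finset.mem_filter.mp hν).2
                    rw [hKi, AddSubgroup.mem_addSubgroupOf]
                    have h2 := (H i).sub_mem (coset_mem.mp hνmem) (coset_mem.mp hwmem)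
                    have h3 : ((ν:G) + (a • v + z') - x i) - ((w:G) + (a • v + z') - x i)
                        = ((ν - w : ↥N) : G) := by push_cast; abel
                    rwa [h3] at h2
                  have hinjsub : Function.Injective (fun ν : ↥N => ν - w) := by
                    intro p q h
                    have := congrArg (· + w) h
                    simpa using this
                  have hcardP : (Pfin i).card ≤ Nat.card ↥Ki := by
                    calc (Pfin i).card = ((Pfin i).image (fun ν => ν - w)).card :=
                          (Finset.card_image_of_injective _ hinjsub).symm
                      _ ≤ (Ki : Set ↥N).toFinset.card := by
                          apply Finset.card_le_card
                          intro ν' hν'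
                          rw [Finset.mem_image] at hν'
                          obtain ⟨ν, hν, rfl⟩ := hν'
                          rw [Set.mem_toFinset]
                          exact hmap ν hν
                      _ = (Ki : Set ↥N).ncard := (Set.ncard_eq_toFinset_card' _).symm
                      _ = Nat.card ↥Ki := by rw [← Nat.card_coe_set_eq]; rfl
                  have hKine : Ki ≠ ⊤ := by
                    intro h
                    apply hbi
                    have h5 : (⟨b, hbN⟩ : ↥N) ∈ Ki := by rw [h]; trivial
                    rwa [hKi, AddSubgroup.mem_addSubgroupOf] at h5
                  have hquot := AddSubgroup.card_eq_card_quotient_mul_card_addSubgroup Ki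
                  have hepos : 0 < Nat.card (↥N ⧸ Ki) := card_pos'
                  have hene1 : Nat.card (↥N ⧸ Ki) ≠ 1 := by
                    intro h1
                    apply hKine
                    apply AddSubgroup.eq_top_of_card_eq
                    rw [hquot, h1, one_mul]
                  have hedvd : Nat.card (↥N ⧸ Ki) ∣ Nat.card G := by
                    have h1 : Nat.card (↥N ⧸ Ki) ∣ Nat.card ↥N := ⟨Nat.card ↥Ki, hquot⟩
                    exact h1.trans (AddSubgroup.card_addSubgroup_dvd_card N)
                  have hem : m + 2 ≤ Nat.card (↥N ⧸ Ki) := by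
                    have hp := Nat.minFac_prime hene1
                    have h6 : m + 1 < (Nat.card (↥N ⧸ Ki)).minFac :=
                      hbig _ hp ((Nat.minFac_dvd _).trans hedvd)
                    have h7 := Nat.minFac_le hepos
                    omega
                  calc (m+2) * (Pfin i).card ≤ (m+2) * Nat.card ↥Ki :=
                        Nat.mul_le_mul_left _ hcardP
                    _ ≤ Nat.card (↥N ⧸ Ki) * Nat.card ↥Ki := Nat.mul_le_mul_right _ hem
                    _ = Nat.card ↥N := hquot.symm
              have hNpos : 1 ≤ Nat.card ↥N := card_pos'
              have hbadcard : bad.card ≤ m + 1 := by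
                calc bad.card ≤ (Finset.univ : Finset (Fin (m+1))).card := Finset.card_filter_le _ _
                  _ = m + 1 := by simp
              have hfinal : (m+2) * Nat.card ↥N ≤ (m+1) * Nat.card ↥N := by
                calc (m+2) * Nat.card ↥N ≤ (m+2) * ∑ i ∈ bad, (Pfin i).card :=
                      Nat.mul_le_mul_left _ hcount1
                  _ = ∑ i ∈ bad, (m+2) * (Pfin i).card := Finset.mul_sum _ _ _
                  _ ≤ ∑ i ∈ bad, Nat.card ↥N := Finset.sum_le_sum hperbound
                  _ = bad.card * Nat.card ↥N := by rw [Finset.sum_const, smul_eq_mul]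
                  _ ≤ (m+1) * Nat.card ↥N := Nat.mul_le_mul_right _ hbadcard
              nlinarith [hNpos, hfinal]
            -- finish with one fewer coset
            exfalso
            have hcov' : SS A c ⊆ ⋃ k : Fin m,
                (((x (i_out.succAbove k) - a • v) + ·) '' ((H (i_out.succAbove k) : Set G))) := by
              intro z' hz'
              obtain ⟨i, hbi, hmem⟩ := step4 z' (ss_mono h0 hc5 hz')
              have hine : i ≠ i_out := by
                rintro rfl
                exact hiout hbi
              obtain ⟨k, hk⟩ := Fin.exists_succAbove_eq hine
              rw [Set.mem_iUnion]
              refine ⟨k, ?_⟩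
              rw [coset_mem]
              have h2 : (a • v + z') - x i ∈ H i := coset_mem.mp hmem
              have h3 : z' - (x (i_out.succAbove k) - a • v)
                  = (a • v + z') - x (i_out.succAbove k) := by abel
              rw [h3, hk]
              exact h2
            have hne' : (⋃ k : Fin m,
                (((x (i_out.succAbove k) - a • v) + ·) '' ((H (i_out.succAbove k) : Set G))))
                ≠ Set.univ := by
              rw [Set.ne_univ_iff_exists_notMem]
              refine ⟨z - a • v, fun hmem => ?_⟩
              rw [Set.mem_iUnion] at hmem
              obtain ⟨k, hk⟩ := hmem
              rw [coset_mem] at hk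
              have h3 : z - a • v - (x (i_out.succAbove k) - a • v)
                  = z - x (i_out.succAbove k) := by abel
              rw [h3] at hk
              apply hz
              rw [hU, Set.mem_iUnion]
              exact ⟨i_out.succAbove k, coset_mem.mpr hk⟩
            obtain ⟨Kf, hKf, hsubf⟩ := ihm G hΩ A h0
              (fun k => x (i_out.succAbove k) - a • v) (fun k => H (i_out.succAbove k)) hcov' hne'
            exact hKf (eq_top_iff.mpr (by rw [← hclo]; exact (closure_le _).mpr hsubf))

        · -- recurse into T
          exfalso
          letI : Fintype (G ⧸ T) := Fintype.ofFinite _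
          set π := QuotientAddGroup.mk' T with hπdef
          have hexp : ∀ q : G ⧸ T, M • q = 0 := by
            intro q
            obtain ⟨g, rfl⟩ := QuotientAddGroup.mk'_surjective T q
            have h1 : π (M • g) = 0 := (QuotientAddGroup.eq_zero_iff _).mpr ⟨g, rfl⟩
            calc M • π g = π (M • g) := (map_nsmul π M g).symm
              _ = 0 := h1
          have hQsmooth : ∀ p : ℕ, p.Prime → p ∣ Nat.card (G ⧸ T) → p ≤ m+1 := by
            intro p hp hdvd
            haveI : Fact p.Prime := ⟨hp⟩
            obtain ⟨q, hq⟩ := exists_prime_addOrderOf_dvd_card (G := G ⧸ T) p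
              (by rwa [← Nat.card_eq_fintype_card])
            have h2 : addOrderOf q ∣ M := addOrderOf_dvd_iff_nsmul_eq_zero.mpr (hexp q)
            rw [hq] at h2
            rw [hM] at h2
            exact (Nat.Prime.dvd_factorial hp).mp h2
          have hQcard : Nat.card (G ⧸ T) ≤ Λ := by
            have h1 : Nat.card (G ⧸ T) ≤
                (m+1) ^ (ArithmeticFunction.cardFactors (Nat.card (G ⧸ T))) :=
              smooth_le (by omega) _ (card_pos' (G := G ⧸ T)).ne' hQsmooth
            have hdvd : Nat.card (G ⧸ T) ∣ Nat.card G :=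
              ⟨Nat.card ↥T, AddSubgroup.card_eq_card_quotient_mul_card_addSubgroup T⟩
            have h2 : ArithmeticFunction.cardFactors (Nat.card (G ⧸ T)) ≤ d + 1 :=
              le_trans (cardFactors_le_of_dvd hdvd (card_pos' (G := G)).ne') hΩ
            calc Nat.card (G ⧸ T) ≤ (m+1) ^ (ArithmeticFunction.cardFactors (Nat.card (G ⧸ T))) := h1
              _ ≤ (m+1) ^ (d+1) := Nat.pow_le_pow_right (by omega) h2
              _ = Λ := by rw [hΛ]
          have hgenQ : closure (⇑π '' A) = ⊤ := by
            rw [← AddMonoidHom.map_closure, hclo, ← AddMonoidHom.range_eq_map]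
            exact AddMonoidHom.range_eq_top.mpr (QuotientAddGroup.mk'_surjective T)
          have hfill := ss_fill (A := ⇑π '' A) ⟨0, h0, map_zero π⟩ hgenQ hQcard
          have hz2 : π z ∈ SS (⇑π '' A) Λ := by rw [hfill]; trivial
          rw [ss_image] at hz2
          obtain ⟨α, hα, hπα⟩ := hz2
          have hτT : z - α ∈ T := by
            have h5 : π (z - α) = 0 := by rw [map_sub, hπα, sub_self]
            exact (QuotientAddGroup.eq_zero_iff _).mp h5
          have hΩT : ArithmeticFunction.cardFactors (Nat.card ↥T) ≤ d :=
            omega_subgroup_lt hTtop hΩ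
          set Bt : Set ↥T := {s : ↥T | ∃ a' ∈ A, (s : G) = M • a'} with hBt
          have h0B : (0 : ↥T) ∈ Bt := ⟨0, h0, by simp⟩
          have hcovT : ∀ s : ↥T, s ∈ SS Bt (kk d (m+1)) →
              ((s:G) + α) ∈ ⋃ i : Fin (m+1), ((x i + ·) '' ((H i : Set G))) := by
            intro s hs
            have h1 : (s : G) ∈ SS (T.subtype '' Bt) a := ss_coe_mem hs
            have h2 : T.subtype '' Bt ⊆ SS A M := by
              rintro g ⟨s', ⟨a', ha', hsa⟩, rfl⟩
              have h3 : a' ∈ SS A 1 := by rwa [ss_one]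
              have h4 := ss_nsmul_mem h3 M
              rw [mul_one] at h4
              show (s' : G) ∈ SS A M
              rw [hsa]
              exact h4
            have h4 : (s:G) ∈ SS (SS A M) a := ss_set_mono h2 _ h1
            have h5 : (s:G) ∈ SS A (a * M) := ss_ss h4
            have h6 : (s:G) + α ∈ SS A (a * M + Λ) := ss_add_mem h5 hα
            have h7 := hcov (ss_mono h0 (le_trans hK3 (le_refl K)) h6)
            rwa [hU] at h7
          have hτne : (((⟨z - α, hτT⟩ : ↥T) : G) + α) ∉
              ⋃ i : Fin (m+1), ((x i + ·) '' ((H i : Set G))) := by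
            have h8 : ((⟨z - α, hτT⟩ : ↥T) : G) + α = z := sub_add_cancel z α
            rw [h8]
            rw [hU] at hz
            exact hz
          obtain ⟨Kt, hKt, hBsub⟩ := subcall (ihd (m+1)) x H T hΩT Bt h0B α hcovT
            ⟨z - α, hτT⟩ hτne
          have himg : T.subtype '' Bt = ⇑φM '' A := by
            ext g
            constructor
            · rintro ⟨s, ⟨a', ha', hsa⟩, rfl⟩
              exact ⟨a', ha', hsa.symm⟩
            · rintro ⟨a', ha', rfl⟩
              exact ⟨⟨M • a', ⟨a', rfl⟩⟩, ⟨a', ha', rfl⟩, rfl⟩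
          have hclosBt : closure Bt = (⊤ : AddSubgroup ↥T) := by
            apply closure_subtype_top
            rw [himg, ← AddMonoidHom.map_closure, hclo, ← AddMonoidHom.range_eq_map]
          exact hKt (eq_top_iff.mpr (by rw [← hclosBt]; exact (closure_le _).mpr hBsub))


theorem stmt_1 (d m : ℕ) (hd : 1 ≤ d) (hm : 1 ≤ m) :
    ∃ k : ℕ, ∀ (G : Type) [AddCommGroup G] [Fintype G],
      ArithmeticFunction.cardFactors (Nat.card G) ≤ d →
      ∀ (A : Set G), (0 : G) ∈ A →
      ∀ (x : Fin m → G) (H : Fin m → AddSubgroup G),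
        {g : G | ∃ f : Fin k → G, (∀ i, f i ∈ A) ∧ g = ∑ i, f i} ⊆
          ⋃ i : Fin m, ((x i + ·) '' (H i : Set G)) →
        (⋃ i : Fin m, ((x i + ·) '' (H i : Set G))) ≠ Set.univ →
        ∃ K : AddSubgroup G, K ≠ ⊤ ∧ A ⊆ (K : Set G) := by
  refine ⟨kk d m, ?_⟩
  intro G instG instF hΩ A h0 x H hcov hne
  exact master d m G hΩ A h0 x H hcov hne
end

section
/- Let A : [0,∞) → ℂ be Lipschitz with constant 1, A(0) = 0, and suppose A is differentiable a.e. with derivative a satisfying a(t) ≥ 1 − 2·log(4√e·t) for all t in [1/(4√e), 1/(2√e)) and a(t) = 1 for t < 1/(4√e), where a(t) is continuous on this range and satisfies t·a(t) = ∫₀ᵗ a(u) du − ∫₀^{t−1/(4√e)} (1 − b(t−u)) du with 0 ≤ 1 − b ≤ 2. Then if equality a(1/4) = 1 − 2·log(4√e·(1/4)) holds at t = 1/4, one must have b(t) = −1 for almost every t ∈ (1/(4√e), 1/4]. -/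
/-!
Write `c = 1/(4√e)`. The hypothesis at `t = 1/4` says `a(1/4) = 0`, so the integral identity there
reads `∫_c^{1/4} (1 - b) = ∫_0^{1/4} a`. Integrating `a = 1` on `[0, c)` and
`a ≥ 1 - 2 log(4√e u)` on `[c, 1/4]` gives `∫_0^{1/4} a ≥ 2 (1/4 - c)`, which is the largest value
`∫_c^{1/4} (1 - b)` can take when `1 - b ≤ 2`. Hence `1 - b = 2` almost everywhere on `(c, 1/4]`.
-/

open MeasureTheory Set Real intervalIntegral

lemma one_lt_sqrt_exp_one : 1 < √(exp 1) :=
  lt_sqrt_of_sq_lt (by simp)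

lemma sqrt_exp_one_lt_two : √(exp 1) < 2 :=
  (sqrt_lt' two_pos).2 (by linarith [exp_one_lt_d9])

lemma log_sqrt_exp_one : log √(exp 1) = 1 / 2 := by
  rw [log_sqrt (exp_pos 1).le, log_exp]

lemma intervalIntegrable_one_sub_two_mul_log_mul {k x y : ℝ} (hk : 0 < k) (hx : 0 < x)
    (hy : 0 < y) : IntervalIntegrable (fun u => 1 - 2 * log (k * u)) volume x y := by
  refine ContinuousOn.intervalIntegrable (continuousOn_const.sub (continuousOn_const.mul ?_))
  exact (continuousOn_const.mul continuousOn_id).log fun u hu =>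
    (mul_pos hk ((lt_min hx hy).trans_le hu.1)).ne'

theorem integral_one_sub_two_mul_log_mul {k x y : ℝ} (hk : 0 < k) (hx : 0 < x) (hy : 0 < y) :
    ∫ u in x..y, (1 - 2 * log (k * u)) =
      (3 * y - 2 * y * log (k * y)) - (3 * x - 2 * x * log (k * x)) := by
  have hderiv : ∀ u ∈ uIcc x y,
      HasDerivAt (fun u => 3 * u - 2 * (u * log (k * u))) (1 - 2 * log (k * u)) u := by
    intro u hu
    have hu : 0 < u := (lt_min hx hy).trans_le hu.1
    have hlog : HasDerivAt (fun u => log (k * u)) (k / (k * u)) u := by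
      simpa using ((hasDerivAt_id u).const_mul k).log (mul_pos hk hu).ne'
    refine (((hasDerivAt_id' u).const_mul 3).sub
      (((hasDerivAt_id' u).mul hlog).const_mul 2)).congr_deriv ?_
    field_simp
    ring
  rw [integral_eq_sub_of_hasDerivAt hderiv (intervalIntegrable_one_sub_two_mul_log_mul hk hx hy)]
  ring

theorem ae_eq_of_le_of_le_integral {f : ℝ → ℝ} {x y M : ℝ} (hxy : x ≤ y)
    (hf : IntervalIntegrable f volume x y) (hle : ∀ u ∈ Icc x y, f u ≤ M)
    (hint : M * (y - x) ≤ ∫ u in x..y, f u) : ∀ᵐ u, u ∈ Ioc x y → f u = M := by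
  have hgap : IntervalIntegrable (fun u => M - f u) volume x y := intervalIntegrable_const.sub hf
  have hzero : ∫ u in x..y, (M - f u) = 0 := by
    have hupper : ∫ u in x..y, f u ≤ ∫ _ in x..y, M :=
      integral_mono_on hxy hf intervalIntegrable_const hle
    rw [integral_sub intervalIntegrable_const hf]
    simp only [intervalIntegral.integral_const, smul_eq_mul] at hupper ⊢
    linarith
  have hae := (integral_eq_zero_iff_of_le_of_nonneg_ae hxy
    (ae_restrict_of_forall_mem measurableSet_Ioc fun u hu =>
      sub_nonneg.2 (hle u (Ioc_subset_Icc_self hu))) hgap).1 hzero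
  filter_upwards [ae_imp_of_ae_restrict hae] with u hu hmem
  exact (sub_eq_zero.1 (hu hmem)).symm

theorem le_integral_of_eq_one_of_log_le {a : ℝ → ℝ} {k t : ℝ} (hk : 0 < k) (ht : 1 / k ≤ t)
    (hone : ∀ u : ℝ, 0 ≤ u → u < 1 / k → a u = 1)
    (hlog : ∀ u ∈ Icc (1 / k) t, 1 - 2 * log (k * u) ≤ a u)
    (hcont : ContinuousOn a (Icc (1 / k) t)) :
    3 * t - 2 * t * log (k * t) - 2 * (1 / k) ≤ ∫ u in 0..t, a u := by
  set c := 1 / k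
  have hc : 0 < c := by positivity
  have hkc : k * c = 1 := mul_one_div_cancel hk.ne'
  have hEq : EqOn a 1 (Ioo 0 c) := fun u hu => hone u hu.1.le hu.2
  have hint₁ : IntervalIntegrable a volume 0 c :=
    (intervalIntegrable_congr_uIoo (uIoo_of_le hc.le ▸ hEq)).2 intervalIntegrable_const
  have hint₂ : IntervalIntegrable a volume c t := hcont.intervalIntegrable_of_Icc ht
  have hfirst : ∫ u in 0..c, a u = c := by
    rw [integral_congr_Ioo_of_le hc.le hEq]
    simp
  have hsecond : 3 * t - 2 * t * log (k * t) - 3 * c ≤ ∫ u in c..t, a u := by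
    have hg := integral_one_sub_two_mul_log_mul hk hc (hc.trans_le ht)
    rw [hkc, log_one] at hg
    calc 3 * t - 2 * t * log (k * t) - 3 * c = ∫ u in c..t, (1 - 2 * log (k * u)) := by
          rw [hg]; ring
      _ ≤ ∫ u in c..t, a u :=
          integral_mono_on ht (intervalIntegrable_one_sub_two_mul_log_mul hk hc (hc.trans_le ht))
            hint₂ hlog
  rw [← integral_add_adjacent_intervals hint₁ hint₂, hfirst]
  linarith

theorem stmt_10_general (a b : ℝ → ℝ)
    (h1 : ∀ t ∈ Set.Ico (1 / (4 * Real.sqrt (Real.exp 1)))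
        (1 / (2 * Real.sqrt (Real.exp 1))),
        a t ≥ 1 - 2 * Real.log (4 * Real.sqrt (Real.exp 1) * t))
    (h2 : ∀ t : ℝ, 0 ≤ t → t < 1 / (4 * Real.sqrt (Real.exp 1)) → a t = 1)
    (hcont : ContinuousOn a (Set.Ico (1 / (4 * Real.sqrt (Real.exp 1)))
        (1 / (2 * Real.sqrt (Real.exp 1)))))
    (heq : ∀ t ∈ Set.Ico (1 / (4 * Real.sqrt (Real.exp 1)))
        (1 / (2 * Real.sqrt (Real.exp 1))),
        t * a t = (∫ u in (0 : ℝ)..t, a u)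
          - ∫ u in (0 : ℝ)..(t - 1 / (4 * Real.sqrt (Real.exp 1))), (1 - b (t - u)))
    (hb_rng : ∀ t : ℝ, 0 ≤ 1 - b t ∧ 1 - b t ≤ 2)
    (hEq14 : a (1 / 4) = 1 - 2 * Real.log (4 * Real.sqrt (Real.exp 1) * (1 / 4))) :
    ∀ᵐ t : ℝ ∂volume,
      t ∈ Set.Ioc (1 / (4 * Real.sqrt (Real.exp 1))) (1 / 4) → b t = -1 := by
  set k := 4 * √(exp 1)
  have hk : 0 < k := by positivity
  have hc : 1 / k < 1 / 4 :=
    one_div_lt_one_div_of_lt (by norm_num) (by linarith [one_lt_sqrt_exp_one])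
  have hquarter : (1 : ℝ) / 4 < 1 / (2 * √(exp 1)) :=
    one_div_lt_one_div_of_lt (by positivity) (by linarith [sqrt_exp_one_lt_two])
  have hlogk : log (k * (1 / 4)) = 1 / 2 := by
    rw [show k * (1 / 4) = √(exp 1) by ring, log_sqrt_exp_one]
  have ha : a (1 / 4) = 0 := by rw [hEq14, hlogk]; norm_num
  have hlow := le_integral_of_eq_one_of_log_le hk hc.le h2
    (fun u hu => h1 u ⟨hu.1, hu.2.trans_lt hquarter⟩) (hcont.mono (Icc_subset_Ico_right hquarter))
  have hb : ∫ u in 1 / k..1 / 4, (1 - b u) = ∫ u in 0..1 / 4, a u := by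
    have h := heq (1 / 4) ⟨hc.le, hquarter⟩
    rw [ha, mul_zero, integral_comp_sub_left (fun u => 1 - b u)] at h
    simp only [sub_sub_cancel, sub_zero] at h
    linarith
  have hmass : 2 * (1 / 4 - 1 / k) ≤ ∫ u in 1 / k..1 / 4, (1 - b u) := by
    rw [hlogk] at hlow
    rw [hb]
    linarith
  -- `b` is not assumed measurable: integrability comes from the integral being nonzero.
  have hint : IntervalIntegrable (fun u => 1 - b u) volume (1 / k) (1 / 4) :=
    intervalIntegrable_of_integral_ne_zero (lt_of_lt_of_le (by linarith) hmass).ne'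
  filter_upwards [ae_eq_of_le_of_le_integral hc.le hint (fun u _ => (hb_rng u).2) hmass]
    with u hu hmem
  linarith [hu hmem]

theorem stmt_10 (A : ℝ → ℂ) (a b : ℝ → ℝ)
    (hA_lip : LipschitzOnWith 1 A (Set.Ici 0)) (hA0 : A 0 = 0)
    (ha_bd : ∀ t : ℝ, |a t| ≤ 1) (hb_bd : ∀ t : ℝ, |b t| ≤ 1)
    (hderiv : ∀ᵐ t : ℝ ∂volume, 0 < t → HasDerivAt A ((a t : ℂ)) t)
    (h1 : ∀ t ∈ Set.Ico (1 / (4 * Real.sqrt (Real.exp 1)))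
        (1 / (2 * Real.sqrt (Real.exp 1))),
        a t ≥ 1 - 2 * Real.log (4 * Real.sqrt (Real.exp 1) * t))
    (h2 : ∀ t : ℝ, 0 ≤ t → t < 1 / (4 * Real.sqrt (Real.exp 1)) → a t = 1)
    (hcont : ContinuousOn a (Set.Ico (1 / (4 * Real.sqrt (Real.exp 1)))
        (1 / (2 * Real.sqrt (Real.exp 1)))))
    (heq : ∀ t ∈ Set.Ico (1 / (4 * Real.sqrt (Real.exp 1)))
        (1 / (2 * Real.sqrt (Real.exp 1))),
        t * a t = (∫ u in (0 : ℝ)..t, a u)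
          - ∫ u in (0 : ℝ)..(t - 1 / (4 * Real.sqrt (Real.exp 1))), (1 - b (t - u)))
    (hb_rng : ∀ t : ℝ, 0 ≤ 1 - b t ∧ 1 - b t ≤ 2)
    (hEq14 : a (1 / 4) = 1 - 2 * Real.log (4 * Real.sqrt (Real.exp 1) * (1 / 4))) :
    ∀ᵐ t : ℝ ∂volume,
      t ∈ Set.Ioc (1 / (4 * Real.sqrt (Real.exp 1))) (1 / 4) → b t = -1 :=
  stmt_10_general a b h1 h2 hcont heq hb_rng hEq14
end
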